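/- Suppose the black-box experts algorithm (FPL over stationary deterministic policies) chooses policy π from time t_1 to t_2 and Algorithm 3 runs its Switch_Policy procedure at time t_1 to catch π. Then E[Σ_{t=t_1}^{t_2} ℓ_t(s_t,a_t)] ≤ 48·D² + Σ_{t=t_1}^{t_2} ℓ̂_t(π), where s_t, a_t are the states and actions of Algorithm 3 and ℓ̂_t(π) = E[ℓ_t(s_t^π, a_t^π)] is the expected loss at time t of following π from the start of the interaction. -/
import Mathlib


open MeasureTheory ProbabilityTheory
open scoped ENNReal

/-- `stateDist P d1 π t` is the distribution over states at time `t` (with time `0` the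
start of the interaction) when the initial state is drawn from `d1` and the stationary
deterministic policy `π` is followed in the MDP with transition kernel `P`; this is the
distribution denoted `d_π^t` in the paper. -/
noncomputable def stateDist {S A : Type*} [Fintype S] (P : S → A → S → ℝ) (d1 : S → ℝ)
    (π : S → A) : ℕ → S → ℝ
  | 0 => d1
  | t + 1 => fun s' => ∑ s, stateDist P d1 π t s * P s (π s) s'

/-- `hatLoss P d1 ℓ π t = ℓ̂_t(π)`, the expected loss at time `t` of following the
stationary deterministic policy `π` from the start of the interaction
(`s_1 ∼ d1`, `a_t = π(s_t)`). -/
noncomputable def hatLoss {S A : Type*} [Fintype S] (P : S → A → S → ℝ) (d1 : S → ℝ)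
    (ℓ : ℕ → S → A → ℝ) (π : S → A) (t : ℕ) : ℝ :=
  ∑ s, stateDist P d1 π t s * ℓ t s (π s)

/-- (Lemma 4 of the paper.)  Suppose the black-box experts algorithm
chooses policy `π` from time `t1` to `t2` and Algorithm 3 runs its `Switch_Policy`
procedure starting at time `t1` to catch `π`, finishing at the random time `W = T_switch`
(so `E[W − t1] ≤ 48D²`), after which the algorithm's state is distributed as if `π` had
been followed from the start, so its expected per-step losses equal `ℓ̂_t(π)`.  Then
`E[∑_{t=t1}^{t2} ℓ_t(s_t,a_t)] ≤ 48·D² + ∑_{t=t1}^{t2} ℓ̂_t(π)`. -/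
theorem alg3_segment_loss_bound
    {S A : Type*} [Fintype S] [Fintype A]
    (P : S → A → S → ℝ) (d1 : S → ℝ)
    (hP0 : ∀ s a s', 0 ≤ P s a s') (hP1 : ∀ s a, ∑ s', P s a s' = 1)
    (hd10 : ∀ s, 0 ≤ d1 s) (hd11 : ∑ s, d1 s = 1)
    (ℓ : ℕ → S → A → ℝ) (hℓ : ∀ t s a, 0 ≤ ℓ t s a ∧ ℓ t s a ≤ 1)
    (π : S → A) (t1 t2 : ℕ) (ht : t1 ≤ t2) (D : ℝ) (hD : 0 < D)
    (Ω : Type*) [MeasurableSpace Ω] (μ : Measure Ω) [IsProbabilityMeasure μ]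
    -- `st, at'` are the state and action processes of Algorithm 3 and `W` is the time
    -- `T_switch` at which the `Switch_Policy` procedure terminates
    (st : ℕ → Ω → S) (at' : ℕ → Ω → A) (W : Ω → ℕ)
    (hmeas : ∀ t, Measurable fun ω => ℓ t (st t ω) (at' t ω))
    (hWmeas : ∀ u, MeasurableSet {ω | W ω = u})
    (hW1 : ∀ ω, t1 ≤ W ω)
    -- `E[T_switch] ≤ 48 D²` (Switch_Policy takes at most `48 D²` steps in expectation)
    (hWexp : ∫⁻ ω, ((W ω - t1 : ℕ) : ℝ≥0∞) ∂μ ≤ ENNReal.ofReal (48 * D ^ 2))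
    -- once the switch has completed at time `u = T_switch`, the state distribution
    -- coincides with that of `π` followed from the start, so the conditional expected
    -- loss at each later time `t` equals `ℓ̂_t(π)`
    (hcaught : ∀ t : ℕ, t1 ≤ t → t ≤ t2 → ∀ u : ℕ, u ≤ t →
      ∫⁻ ω in {ω | W ω = u}, ENNReal.ofReal (ℓ t (st t ω) (at' t ω)) ∂μ =
        ENNReal.ofReal (hatLoss P d1 ℓ π t) * μ {ω | W ω = u}) :
    ∫⁻ ω, (∑ t ∈ Finset.Icc t1 t2, ENNReal.ofReal (ℓ t (st t ω) (at' t ω))) ∂μ ≤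
      ENNReal.ofReal (48 * D ^ 2) +
        ∑ t ∈ Finset.Icc t1 t2, ENNReal.ofReal (hatLoss P d1 ℓ π t) := by

  classical
  have hW : Measurable W := measurable_to_countable' (fun u => hWmeas u)
  have hf : ∀ t, Measurable fun ω => ENNReal.ofReal (ℓ t (st t ω) (at' t ω)) :=
    fun t => (hmeas t).ennreal_ofReal
  rw [lintegral_finset_sum _ (fun t _ => hf t)]
  have key : ∀ t ∈ Finset.Icc t1 t2,
      ∫⁻ ω, ENNReal.ofReal (ℓ t (st t ω) (at' t ω)) ∂μ ≤
        μ {ω | t < W ω} + ENNReal.ofReal (hatLoss P d1 ℓ π t) := by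
    intro t htt
    obtain ⟨h1, h2⟩ := Finset.mem_Icc.mp htt
    have hsle : MeasurableSet {ω | W ω ≤ t} := measurableSet_le hW measurable_const
    have hcompl : {ω | W ω ≤ t}ᶜ = {ω | t < W ω} := by
      ext ω; simp [Set.mem_compl_iff, not_le]
    have hunion : {ω | W ω ≤ t} = ⋃ u ∈ Finset.Iic t, {ω | W ω = u} := by
      ext ω; simp
    have hpart : ∫⁻ ω in {ω | W ω ≤ t}, ENNReal.ofReal (ℓ t (st t ω) (at' t ω)) ∂μ ≤
        ENNReal.ofReal (hatLoss P d1 ℓ π t) := by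
      rw [hunion, lintegral_biUnion_finset ?_ (fun u _ => hWmeas u)]
      · calc ∑ u ∈ Finset.Iic t,
              ∫⁻ ω in {ω | W ω = u}, ENNReal.ofReal (ℓ t (st t ω) (at' t ω)) ∂μ
            = ∑ u ∈ Finset.Iic t,
              ENNReal.ofReal (hatLoss P d1 ℓ π t) * μ {ω | W ω = u} := by
              refine Finset.sum_congr rfl fun u hu => ?_
              exact hcaught t h1 h2 u (Finset.mem_Iic.mp hu)
          _ = ENNReal.ofReal (hatLoss P d1 ℓ π t) * ∑ u ∈ Finset.Iic t, μ {ω | W ω = u} := by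
              rw [Finset.mul_sum]
          _ ≤ ENNReal.ofReal (hatLoss P d1 ℓ π t) * 1 := by
              gcongr
              rw [← measure_biUnion_finset ?_ (fun u _ => hWmeas u)]
              · exact prob_le_one
              · intro u hu v hv huv
                refine Set.disjoint_left.mpr fun ω hωu hωv => huv ?_
                simp only [Set.mem_setOf_eq] at hωu hωv
                rw [← hωu, ← hωv]
          _ = ENNReal.ofReal (hatLoss P d1 ℓ π t) := mul_one _
      · intro u hu v hv huv
        refine Set.disjoint_left.mpr fun ω hωu hωv => huv ?_
        simp only [Set.mem_setOf_eq] at hωu hωv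
        rw [← hωu, ← hωv]
    have htail : ∫⁻ ω in {ω | W ω ≤ t}ᶜ, ENNReal.ofReal (ℓ t (st t ω) (at' t ω)) ∂μ ≤
        μ {ω | t < W ω} := by
      rw [hcompl]
      calc ∫⁻ ω in {ω | t < W ω}, ENNReal.ofReal (ℓ t (st t ω) (at' t ω)) ∂μ
          ≤ ∫⁻ _ω in {ω | t < W ω}, 1 ∂μ := by
            refine lintegral_mono fun ω => ?_
            exact ENNReal.ofReal_le_one.mpr (hℓ t _ _).2
        _ = μ {ω | t < W ω} := by simp
    calc ∫⁻ ω, ENNReal.ofReal (ℓ t (st t ω) (at' t ω)) ∂μ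
        = (∫⁻ ω in {ω | W ω ≤ t}, ENNReal.ofReal (ℓ t (st t ω) (at' t ω)) ∂μ) +
          ∫⁻ ω in {ω | W ω ≤ t}ᶜ, ENNReal.ofReal (ℓ t (st t ω) (at' t ω)) ∂μ := by
          rw [lintegral_add_compl _ hsle]
      _ ≤ ENNReal.ofReal (hatLoss P d1 ℓ π t) + μ {ω | t < W ω} := add_le_add hpart htail
      _ = μ {ω | t < W ω} + ENNReal.ofReal (hatLoss P d1 ℓ π t) := add_comm _ _
  have htailsum : ∑ t ∈ Finset.Icc t1 t2, μ {ω | t < W ω} ≤ ENNReal.ofReal (48 * D ^ 2) := by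
    have hmeaslt : ∀ t : ℕ, MeasurableSet {ω | t < W ω} :=
      fun t => measurableSet_lt measurable_const hW
    have h1 : ∑ t ∈ Finset.Icc t1 t2, μ {ω | t < W ω} =
        ∫⁻ ω, ∑ t ∈ Finset.Icc t1 t2, ({ω | t < W ω}.indicator 1 ω) ∂μ := by
      rw [lintegral_finset_sum _ (fun t _ => (measurable_one.indicator (hmeaslt t)))]
      refine Finset.sum_congr rfl fun t _ => ?_
      exact (lintegral_indicator_one (hmeaslt t)).symm
    rw [h1]
    refine le_trans (lintegral_mono fun ω => ?_) hWexp
    calc ∑ t ∈ Finset.Icc t1 t2, ({ω | t < W ω}.indicator 1 ω)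
        = ∑ t ∈ Finset.Icc t1 t2, (if t < W ω then (1:ℝ≥0∞) else 0) := by
          refine Finset.sum_congr rfl fun t _ => ?_
          by_cases h : t < W ω <;> simp [Set.indicator, h]
      _ = ∑ t ∈ (Finset.Icc t1 t2).filter (fun t => t < W ω), (1:ℝ≥0∞) := by
          rw [Finset.sum_filter]
      _ = ((Finset.Icc t1 t2).filter (fun t => t < W ω)).card := by
          rw [Finset.sum_const]; simp
      _ ≤ ((Finset.Ico t1 (W ω)).card : ℝ≥0∞) := by
          have hsub : (Finset.Icc t1 t2).filter (fun t => t < W ω) ⊆ Finset.Ico t1 (W ω) := by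
            intro x hx
            simp only [Finset.mem_filter, Finset.mem_Icc, Finset.mem_Ico] at hx ⊢
            exact ⟨hx.1.1, hx.2⟩
          exact_mod_cast Nat.cast_le.mpr (Finset.card_le_card hsub)
      _ = ((W ω - t1 : ℕ) : ℝ≥0∞) := by rw [Nat.card_Ico]
  calc ∑ t ∈ Finset.Icc t1 t2, ∫⁻ ω, ENNReal.ofReal (ℓ t (st t ω) (at' t ω)) ∂μ
      ≤ ∑ t ∈ Finset.Icc t1 t2,
          (μ {ω | t < W ω} + ENNReal.ofReal (hatLoss P d1 ℓ π t)) :=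
        Finset.sum_le_sum key
    _ = (∑ t ∈ Finset.Icc t1 t2, μ {ω | t < W ω}) +
          ∑ t ∈ Finset.Icc t1 t2, ENNReal.ofReal (hatLoss P d1 ℓ π t) :=
        Finset.sum_add_distrib
    _ ≤ ENNReal.ofReal (48 * D ^ 2) +
          ∑ t ∈ Finset.Icc t1 t2, ENNReal.ofReal (hatLoss P d1 ℓ π t) := by
        gcongr
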